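/- For each real α with 0 < α < 1: lim_{n→∞} (1/n)·∑_{j=1}^{⌊αn⌋} log(2·sin(jπ/n)) = −(1/π)·Λ(πα). [The limiting form of the quantum-factorial asymptotics used in the final step of the proof of Theorem 6.2.] -/

import Mathlib

open Finset Filter Real

/-- The sine factorial `(k)!_n = ∏_{j=1}^k 2 sin(jπ/n)`. -/
noncomputable def sf (n k : ℕ) : ℝ :=
  ∏ j ∈ Finset.Icc 1 k, 2 * Real.sin (j * Real.pi / n)

/-- The Lobachevsky function `Λ(x) = -∫₀ˣ log|2 sin t| dt`. -/
noncomputable def lob (x : ℝ) : ℝ := -∫ t in (0:ℝ)..x, Real.log |2 * Real.sin t|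

/-!
`(1/n) ∑` is `∫₀^{⌊αn⌋/n}` of the step function equal to `log (2 sin (jπ/n))` on `((j-1)/n, j/n]`.
These step functions converge pointwise to `log (2 sin (πs))` on `(0, α)`, and concavity of `sin`
on `[0, π]` bounds all of them below by `log s - C` at `s`, so the logarithmic singularity at `0`
gives an integrable majorant and dominated convergence applies. Substituting `t = πs` in the limit
`∫₀^α log (2 sin (πs)) ds` gives `-(1/π) Λ(πα)`.
-/

open MeasureTheory Set Topology

namespace Real

lemma mul_sin_le_sin_mul {t x : ℝ} (ht₀ : 0 ≤ t) (ht₁ : t ≤ 1) (hx₀ : 0 ≤ x) (hx : x ≤ π) :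
    t * sin x ≤ sin (t * x) := by
  simpa using strictConcaveOn_sin_Icc.concaveOn.2 ⟨le_rfl, pi_pos.le⟩ ⟨hx₀, hx⟩
    (sub_nonneg.2 ht₁) ht₀ (sub_add_cancel 1 t)

end Real

noncomputable def rightStep (g : ℝ → ℝ) (n : ℕ) (s : ℝ) : ℝ := g (⌈s * n⌉₊ / n)

section RightStep

variable {g : ℝ → ℝ} {n : ℕ}

lemma rightStep_eqOn (hn : 0 < n) (k : ℕ) :
    EqOn (rightStep g n) (fun _ ↦ g ((k + 1 : ℕ) / n)) (Ioc (k / n) ((k + 1 : ℕ) / n)) := by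
  intro s ⟨hks, hsk⟩
  have hn' : (0 : ℝ) < n := by exact_mod_cast hn
  rw [div_lt_iff₀ hn'] at hks
  rw [le_div_iff₀ hn'] at hsk
  have : ⌈s * n⌉₊ = k + 1 := by
    rw [Nat.ceil_eq_iff k.succ_ne_zero]
    exact ⟨by simpa using hks, hsk⟩
  simp [rightStep, this]

lemma integrableOn_rightStep_and_setIntegral_eq_sum (hn : 0 < n) (m : ℕ) :
    IntegrableOn (rightStep g n) (Ioc (0 : ℝ) (m / n)) ∧
      ∫ s in Ioc (0 : ℝ) (m / n), rightStep g n s = (1 / n : ℝ) * ∑ j ∈ Icc 1 m, g (j / n) := by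
  induction m with
  | zero => simp
  | succ m ih =>
    have hle : (m / n : ℝ) ≤ (m + 1 : ℕ) / n := by gcongr; simp
    have hsplit : Ioc (0 : ℝ) ((m + 1 : ℕ) / n) =
        Ioc 0 ((m : ℝ) / n) ∪ Ioc ((m : ℝ) / n) ((m + 1 : ℕ) / n) :=
      (Ioc_union_Ioc_eq_Ioc (by positivity) hle).symm
    have hpiece : IntegrableOn (rightStep g n) (Ioc ((m : ℝ) / n) ((m + 1 : ℕ) / n)) :=
      (integrableOn_const measure_Ioc_lt_top.ne).congr_fun (rightStep_eqOn hn m).symm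
        measurableSet_Ioc
    refine ⟨hsplit ▸ ih.1.union hpiece, ?_⟩
    rw [hsplit, setIntegral_union (Ioc_disjoint_Ioc_of_le le_rfl) measurableSet_Ioc ih.1 hpiece,
      ih.2, setIntegral_congr_fun measurableSet_Ioc (rightStep_eqOn hn m), setIntegral_const,
      Real.volume_real_Ioc_of_le hle, smul_eq_mul, Finset.sum_Icc_succ_top (by omega)]
    push_cast
    field_simp
    ring

end RightStep

lemma tendsto_rightStep {g : ℝ → ℝ} {s : ℝ} (hs : 0 ≤ s) (hg : ContinuousAt g s) :
    Tendsto (fun n : ℕ ↦ rightStep g n s) atTop (𝓝 (g s)) :=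
  hg.tendsto.comp ((tendsto_nat_ceil_mul_div_atTop hs).comp tendsto_natCast_atTop_atTop)

lemma ceil_mul_div_mem_Icc {n m : ℕ} {s : ℝ} (hn : 0 < n) (hs : s ≤ m / n) :
    (⌈s * n⌉₊ / n : ℝ) ∈ Icc s (m / n) := by
  have hn' : (0 : ℝ) < n := by exact_mod_cast hn
  rw [le_div_iff₀ hn'] at hs
  refine ⟨(le_div_iff₀ hn').2 (Nat.le_ceil _), ?_⟩
  gcongr
  exact_mod_cast Nat.ceil_le.2 hs

lemma floor_mul_div_le {a : ℝ} (ha : 0 ≤ a) (n : ℕ) : (⌊a * n⌋₊ / n : ℝ) ≤ a := by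
  rcases n.eq_zero_or_pos with rfl | hn
  · simpa using ha
  · rw [div_le_iff₀ (by exact_mod_cast hn)]
    exact Nat.floor_le (by positivity)

theorem tendsto_riemannSum_of_dominated {g bound : ℝ → ℝ} {α : ℝ} (hα : 0 ≤ α)
    (hg : ∀ s ∈ Ioo 0 α, ContinuousAt g s) (hbound : IntegrableOn bound (Ioc 0 α))
    (hdom : ∀ s c, 0 < s → s ≤ c → c ≤ α → |g c| ≤ bound s) :
    Tendsto (fun n : ℕ ↦ (1 / (n : ℝ)) * ∑ j ∈ Icc 1 ⌊α * n⌋₊, g (j / n)) atTop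
      (𝓝 (∫ s in Ioc 0 α, g s)) := by
  set m : ℕ → ℕ := fun n ↦ ⌊α * n⌋₊
  set F : ℕ → ℝ → ℝ := fun n ↦ (Ioc (0 : ℝ) (m n / n)).indicator (rightStep g n)
  have hF_int : ∀ n, 0 < n → Integrable (F n) ∧
      ∫ s in Ioo 0 α, F n s = (1 / (n : ℝ)) * ∑ j ∈ Icc 1 (m n), g (j / n) := by
    intro n hn
    obtain ⟨hint, hval⟩ := integrableOn_rightStep_and_setIntegral_eq_sum (g := g) hn (m n)
    refine ⟨hint.integrable_indicator measurableSet_Ioc, ?_⟩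
    rw [← integral_Ioc_eq_integral_Ioo, integral_indicator measurableSet_Ioc,
      Measure.restrict_restrict measurableSet_Ioc, Set.Ioc_inter_Ioc, max_self,
      min_eq_left (floor_mul_div_le hα n), hval]
  have hF_le : ∀ n, 0 < n → ∀ s ∈ Ioo 0 α, ‖F n s‖ ≤ bound s := by
    intro n hn s hs
    by_cases hsm : s ∈ Ioc (0 : ℝ) (m n / n)
    · obtain ⟨hsc, hcm⟩ := ceil_mul_div_mem_Icc hn hsm.2
      simpa [F, hsm, rightStep] using hdom s _ hs.1 hsc (hcm.trans (floor_mul_div_le hα n))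
    · simpa [F, hsm] using (abs_nonneg _).trans (hdom s s hs.1 le_rfl hs.2.le)
  have hF_lim : ∀ s ∈ Ioo 0 α, Tendsto (fun n ↦ F n s) atTop (𝓝 (g s)) := by
    intro s hs
    have hm : Tendsto (fun n : ℕ ↦ (m n / n : ℝ)) atTop (𝓝 α) :=
      (tendsto_nat_floor_mul_div_atTop hα).comp tendsto_natCast_atTop_atTop
    refine (tendsto_rightStep hs.1.le (hg s hs)).congr' ?_
    filter_upwards [hm.eventually (eventually_ge_nhds hs.2)] with n hn
    simp [F, indicator_of_mem (show s ∈ Ioc 0 (m n / n : ℝ) from ⟨hs.1, hn⟩)]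
  rw [integral_Ioc_eq_integral_Ioo]
  refine (tendsto_integral_filter_of_dominated_convergence (F := F) bound ?_ ?_
    (hbound.mono_set Ioo_subset_Ioc_self) ?_).congr' ?_
  · filter_upwards [eventually_gt_atTop 0] with n hn
    exact (hF_int n hn).1.aestronglyMeasurable.restrict
  · filter_upwards [eventually_gt_atTop 0] with n hn
    exact (ae_restrict_iff' measurableSet_Ioo).2 (.of_forall (hF_le n hn))
  · exact (ae_restrict_iff' measurableSet_Ioo).2 (.of_forall hF_lim)
  · filter_upwards [eventually_gt_atTop 0] with n hn
    exact (hF_int n hn).2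

lemma sin_mul_pi_pos {s : ℝ} (hs₀ : 0 < s) (hs₁ : s < 1) : 0 < sin (s * π) :=
  sin_pos_of_pos_of_lt_pi (by positivity) (by nlinarith [pi_pos])

lemma continuousAt_log_two_mul_sin_mul_pi {s : ℝ} (hs₀ : 0 < s) (hs₁ : s < 1) :
    ContinuousAt (fun s ↦ log (2 * sin (s * π))) s := by
  have := sin_mul_pi_pos hs₀ hs₁
  fun_prop (disch := positivity)

lemma abs_log_two_mul_sin_mul_pi_le {s c α : ℝ} (hs : 0 < s) (hsc : s ≤ c) (hcα : c ≤ α)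
    (hα : α < 1) :
    |log (2 * sin (c * π))| ≤ -log s + (log 2 + |log (2 * sin (α * π) / α)|) := by
  have hc₀ : 0 < c := hs.trans_le hsc
  have hα₀ : 0 < α := hc₀.trans_le hcα
  have hsinα : 0 < sin (α * π) := sin_mul_pi_pos hα₀ hα
  have hchord : s * (2 * sin (α * π) / α) ≤ 2 * sin (c * π) := by
    have h := mul_sin_le_sin_mul (t := c / α) (x := α * π) (by positivity)
      ((div_le_one hα₀).2 hcα) (by positivity) (by nlinarith [pi_pos])
    rw [show c / α * (α * π) = c * π by field_simp] at h
    calc s * (2 * sin (α * π) / α) ≤ c * (2 * sin (α * π) / α) := by gcongr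
      _ = 2 * (c / α * sin (α * π)) := by ring
      _ ≤ 2 * sin (c * π) := by gcongr
  have hsinc : 0 < 2 * sin (c * π) := lt_of_lt_of_le (by positivity) hchord
  have hlower : log s + log (2 * sin (α * π) / α) ≤ log (2 * sin (c * π)) := by
    rw [← log_mul hs.ne' (by positivity)]
    exact log_le_log (by positivity) hchord
  have hupper : log (2 * sin (c * π)) ≤ log 2 :=
    log_le_log hsinc (by linarith [sin_le_one (c * π)])
  have hlog_s : log s ≤ 0 := log_nonpos hs.le (by linarith)
  have hlog_two : 0 ≤ log 2 := log_nonneg one_le_two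
  rw [abs_le]
  constructor <;> linarith [neg_abs_le (log (2 * sin (α * π) / α)),
    abs_nonneg (log (2 * sin (α * π) / α))]

lemma integral_log_two_mul_sin_mul_pi {α : ℝ} (hα₀ : 0 ≤ α) (hα₁ : α ≤ 1) :
    ∫ s in Ioc 0 α, log (2 * sin (s * π)) = -(1 / π) * lob (π * α) := by
  have hsin : EqOn (fun s ↦ log |2 * sin (s * π)|) (fun s ↦ log (2 * sin (s * π))) (uIcc 0 α) := by
    intro s hs
    rw [uIcc_of_le hα₀] at hs
    have : 0 ≤ sin (s * π) :=
      sin_nonneg_of_nonneg_of_le_pi (by nlinarith [pi_pos, hs.1]) (by nlinarith [pi_pos, hs.2])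
    simp only [abs_of_nonneg (by positivity : 0 ≤ 2 * sin (s * π))]
  rw [← intervalIntegral.integral_of_le hα₀, ← intervalIntegral.integral_congr hsin,
    intervalIntegral.integral_comp_mul_right (fun t ↦ log |2 * sin t|) pi_ne_zero, lob]
  simp [mul_comm α]

theorem sine_factorial_limit (α : ℝ) (h0 : 0 < α) (h1 : α < 1) :
    Filter.Tendsto
      (fun n : ℕ => (1 / (n : ℝ)) *
        ∑ j ∈ Finset.Icc 1 ⌊α * (n : ℝ)⌋₊, Real.log (2 * Real.sin (j * Real.pi / n)))
      Filter.atTop (nhds (-(1 / Real.pi) * lob (Real.pi * α))) := by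
  have hbound : IntegrableOn (fun s ↦ -log s + (log 2 + |log (2 * sin (α * π) / α)|)) (Ioc 0 α) :=
    (intervalIntegral.intervalIntegrable_log'.neg.add intervalIntegrable_const).1
  have hlim := tendsto_riemannSum_of_dominated (g := fun s ↦ log (2 * sin (s * π))) h0.le
    (fun s hs ↦ continuousAt_log_two_mul_sin_mul_pi hs.1 (hs.2.trans h1))
    hbound (fun s c hs hsc hcα ↦ abs_log_two_mul_sin_mul_pi_le hs hsc hcα h1)
  rw [integral_log_two_mul_sin_mul_pi h0.le h1.le] at hlim
  simpa only [div_mul_eq_mul_div] using hlim
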